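/- Let f₀ : [0,T] → R^2 be C^2, λ₀ : [0,T] → R C^1, μ₋₁, μ₀ continuous, Δf₋₁ = f₀ − f₋₁, Δf₀ = f₁ − f₀ with f₋₁, f₁ : [0,T] → R^2 continuous, and f₁ C^1. Define e(t) = λ₀'(t)·f₀'(t) + λ₀(t)·f₀''(t) + μ₀(t)·Δf₀(t) − μ₋₁(t)·Δf₋₁(t). Suppose that for every s, t ∈ [0,T], det(e(t), f₁(s) − f₀(t)) = 0, and that for every s, the vectors Δf₀(s) and f₁'(s) are linearly independent. Then e(s) = 0 for all s ∈ [0,T]. -/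

import Mathlib

/-!
Fix `s`. The function `u ↦ det(e(s), f₁(u) − f₀(s))` vanishes on `[0, T]`, so its derivative
`det(e(s), f₁'(s))` vanishes at `s`; together with `det(e(s), f₁(s) − f₀(s)) = 0` this says that
`e(s)` is orthogonal, for the determinant pairing, to two linearly independent vectors, so `e(s) = 0`.
-/

/-- 2×2 determinant of two vectors in ℝ². -/
def det2 (u v : ℝ × ℝ) : ℝ := u.1 * v.2 - u.2 * v.1

-- Cramer's rule.
lemma det2_smul_eq (v a b : ℝ × ℝ) : det2 a b • v = det2 v b • a - det2 v a • b := by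
  ext <;> simp only [det2, Prod.smul_fst, Prod.smul_snd, Prod.fst_sub, Prod.snd_sub,
    smul_eq_mul] <;> ring

lemma det2_ne_zero_of_linearIndependent {a b : ℝ × ℝ} (h : LinearIndependent ℝ ![a, b]) :
    det2 a b ≠ 0 := by
  intro hab
  rw [LinearIndependent.pair_iff] at h
  simp only [det2] at hab
  have h₂ : b.2 = 0 ∧ -a.2 = 0 := h _ _ (by ext <;> simp <;> linarith)
  have h₁ : -b.1 = 0 ∧ a.1 = 0 := h _ _ (by ext <;> simp <;> linarith)
  have ha : a = 0 := Prod.ext h₁.2 (neg_eq_zero.mp h₂.2)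
  exact one_ne_zero (h 1 0 (by simp [ha])).1

lemma eq_zero_of_det2_eq_zero_of_linearIndependent {v a b : ℝ × ℝ} (ha : det2 v a = 0)
    (hb : det2 v b = 0) (hab : LinearIndependent ℝ ![a, b]) : v = 0 := by
  have hv : det2 a b • v = 0 := by rw [det2_smul_eq, ha, hb]; simp
  exact (smul_eq_zero.mp hv).resolve_left (det2_ne_zero_of_linearIndependent hab)

lemma HasDerivAt.const_det2 {f : ℝ → ℝ × ℝ} {f' : ℝ × ℝ} {x : ℝ} (v : ℝ × ℝ)
    (hf : HasDerivAt f f' x) : HasDerivAt (fun u ↦ det2 v (f u)) (det2 v f') x := by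
  have hfst : HasDerivAt (fun u ↦ (f u).1) f'.1 x := by
    simpa using hf.hasFDerivAt.fst.hasDerivAt
  have hsnd : HasDerivAt (fun u ↦ (f u).2) f'.2 x := by
    simpa using hf.hasFDerivAt.snd.hasDerivAt
  exact (hsnd.const_mul v.1).sub (hfst.const_mul v.2)

lemma HasDerivWithinAt.eq_zero_of_eqOn_zero {𝕜 F : Type*} [NontriviallyNormedField 𝕜]
    [NormedAddCommGroup F] [NormedSpace 𝕜 F] {f : 𝕜 → F} {f' : F} {s : Set 𝕜} {x : 𝕜}
    (h : HasDerivWithinAt f f' s x) (hs : UniqueDiffWithinAt 𝕜 s x) (hf : Set.EqOn f 0 s)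
    (hx : x ∈ s) : f' = 0 :=
  hs.eq_deriv s h ((hasDerivWithinAt_const x s 0).congr hf (hf hx))

theorem equilibrium_from_path_independence_general (T : ℝ) (hT : 0 < T)
    (f₀ f₁ : ℝ → ℝ × ℝ)
    (hf₁ : ContDiff ℝ 1 f₁)
    (e : ℝ → ℝ × ℝ)
    (hdet : ∀ s ∈ Set.Icc (0:ℝ) T, ∀ t ∈ Set.Icc (0:ℝ) T,
      det2 (e t) (f₁ s - f₀ t) = 0)
    (hli : ∀ s ∈ Set.Icc (0:ℝ) T,
      LinearIndependent ℝ ![f₁ s - f₀ s, deriv f₁ s]) :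
    ∀ s ∈ Set.Icc (0:ℝ) T, e s = 0 := by
  intro s hs
  have hderiv : HasDerivAt (fun u ↦ det2 (e s) (f₁ u - f₀ s)) (det2 (e s) (deriv f₁ s)) s :=
    ((hf₁.differentiable one_ne_zero s).hasDerivAt.sub_const (f₀ s)).const_det2 (e s)
  have hdet' : det2 (e s) (deriv f₁ s) = 0 :=
    hderiv.hasDerivWithinAt.eq_zero_of_eqOn_zero (uniqueDiffOn_Icc hT s hs)
      (fun u hu ↦ hdet u hu s hs) hs
  exact eq_zero_of_det2_eq_zero_of_linearIndependent (hdet s hs s hs) hdet' (hli s hs)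

/-- If the equilibrium expression e pairs to zero (via det) with all vectors
f₁(s) − f₀(t), and the discrete and smooth derivatives Δf₀(s), f₁'(s) are
linearly independent, then e vanishes identically. -/
theorem equilibrium_from_path_independence (T : ℝ) (hT : 0 < T)
    (f₀ fm f₁ : ℝ → ℝ × ℝ) (lam₀ μm μ₀ : ℝ → ℝ)
    (hf₀ : ContDiff ℝ 2 f₀) (hlam₀ : ContDiff ℝ 1 lam₀)
    (hμm : ContinuousOn μm (Set.Icc 0 T)) (hμ₀ : ContinuousOn μ₀ (Set.Icc 0 T))
    (hfm : ContinuousOn fm (Set.Icc 0 T)) (hf₁ : ContDiff ℝ 1 f₁)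
    (e : ℝ → ℝ × ℝ)
    (he : ∀ t, e t = deriv lam₀ t • deriv f₀ t + lam₀ t • deriv (deriv f₀) t
      + μ₀ t • (f₁ t - f₀ t) - μm t • (f₀ t - fm t))
    (hdet : ∀ s ∈ Set.Icc (0:ℝ) T, ∀ t ∈ Set.Icc (0:ℝ) T,
      det2 (e t) (f₁ s - f₀ t) = 0)
    (hli : ∀ s ∈ Set.Icc (0:ℝ) T,
      LinearIndependent ℝ ![f₁ s - f₀ s, deriv f₁ s]) :
    ∀ s ∈ Set.Icc (0:ℝ) T, e s = 0 :=
  equilibrium_from_path_independence_general T hT f₀ f₁ hf₁ e hdet hli
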